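/- arXiv:2304.00437 — 5 statements merged into one kernel-verified Lean document; each statement's English description precedes it below -/
import Mathlib

section
/- Let ψ(a,b) = (a²b + ab²)/(a² + b²) for (a,b) ≠ (0,0) and ψ(0,0) = 0 (the van Albada limiter). Then for all a, b with b ≠ 0, one has (1 - √2)/2 ≤ ψ(a,b)/b ≤ (1 + √2)/2. -/
/-- The van Albada limiter.  Note that in Lean division by zero yields `0`,
so this definition automatically satisfies `vanAlbada 0 0 = 0`. -/
noncomputable def vanAlbada (a b : ℝ) : ℝ := (a ^ 2 * b + a * b ^ 2) / (a ^ 2 + b ^ 2)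

theorem vanAlbada_div_right_bounds (a b : ℝ) (hb : b ≠ 0) :
    (1 - Real.sqrt 2) / 2 ≤ vanAlbada a b / b ∧
    vanAlbada a b / b ≤ (1 + Real.sqrt 2) / 2 := by
  have hb2 : 0 < b ^ 2 := by positivity
  have hpos : 0 < a ^ 2 + b ^ 2 := by positivity
  have hs2 : Real.sqrt 2 ^ 2 = 2 := Real.sq_sqrt (by norm_num)
  have hs1 : 1 ≤ Real.sqrt 2 := by
    nlinarith [Real.sqrt_nonneg 2]
  have key : vanAlbada a b / b = (a ^ 2 + a * b) / (a ^ 2 + b ^ 2) := by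
    unfold vanAlbada
    field_simp
  rw [key]
  constructor
  · rw [div_le_div_iff₀ (by norm_num) hpos]
    have hs3 : Real.sqrt 2 ^ 3 = 2 * Real.sqrt 2 := by
      rw [pow_succ, hs2]
    nlinarith [mul_nonneg (by linarith : (0:ℝ) ≤ 1 + Real.sqrt 2)
      (sq_nonneg (a + (Real.sqrt 2 - 1) * b)), hs3]
  · rw [div_le_div_iff₀ hpos (by norm_num)]
    nlinarith [mul_nonneg (by linarith : (0:ℝ) ≤ Real.sqrt 2 - 1)
      (sq_nonneg (a - (Real.sqrt 2 + 1) * b))]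
end

section
/- Let ψ(a,b) = (a²b + ab²)/(a² + b²) for (a,b) ≠ (0,0) and ψ(0,0) = 0. Then for all a, b with a ≠ 0, one has (1 - √2)/2 ≤ ψ(a,b)/a ≤ (1 + √2)/2. -/
theorem vanAlbada_div_left_bounds (a b : ℝ) (ha : a ≠ 0) :
    (1 - Real.sqrt 2) / 2 ≤ vanAlbada a b / a ∧
    vanAlbada a b / a ≤ (1 + Real.sqrt 2) / 2 := by
  have hpos : (0:ℝ) < a ^ 2 + b ^ 2 := by positivity
  set s := Real.sqrt 2 with hs
  have hs2 : s ^ 2 = 2 := Real.sq_sqrt (by norm_num)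
  have hs1 : 1 ≤ s := by nlinarith [Real.sqrt_nonneg 2]
  have key : vanAlbada a b / a = (a * b + b ^ 2) / (a ^ 2 + b ^ 2) := by
    rw [vanAlbada]
    field_simp
  rw [key]
  have h2 : (s + 1) * (a - (s - 1) * b) ^ 2 = (s + 1) * a ^ 2 - 2 * a * b + (s - 1) * b ^ 2 := by
    linear_combination ((s - 1) * b ^ 2 - 2 * a * b) * hs2
  have h3 : 0 ≤ (s + 1) * a ^ 2 - 2 * a * b + (s - 1) * b ^ 2 :=
    h2 ▸ mul_nonneg (by linarith : (0:ℝ) ≤ s + 1) (sq_nonneg (a - (s - 1) * b))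
  have h4 : (s - 1) * (a + (s + 1) * b) ^ 2 = (s - 1) * a ^ 2 + 2 * a * b + (s + 1) * b ^ 2 := by
    linear_combination ((s + 1) * b ^ 2 + 2 * a * b) * hs2
  have h5 : 0 ≤ (s - 1) * a ^ 2 + 2 * a * b + (s + 1) * b ^ 2 :=
    h4 ▸ mul_nonneg (by linarith : (0:ℝ) ≤ s - 1) (sq_nonneg (a + (s + 1) * b))
  constructor
  · rw [div_le_div_iff₀ (by norm_num) hpos]
    nlinarith [h5]
  · rw [div_le_div_iff₀ hpos (by norm_num)]
    nlinarith [h3]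
end

section
/- Let ψ be the van Albada limiter ψ(a,b) = (a²b + ab²)/(a² + b²) (with ψ(0,0) = 0). For any reals a, b, c with b ≠ 0, |ψ(b,c) - ψ(a,b)| ≤ √2 · |b|. -/
lemma vanAlbada_symm (a b : ℝ) : vanAlbada a b = vanAlbada b a := by
  unfold vanAlbada; ring_nf

lemma vanAlbada_center (x b : ℝ) (hb : b ≠ 0) :
    |vanAlbada x b - b / 2| ≤ Real.sqrt 2 / 2 * |b| := by
  have hd : (0:ℝ) < x ^ 2 + b ^ 2 := by positivity
  have heq : vanAlbada x b - b / 2 = b * (x ^ 2 + 2 * x * b - b ^ 2) / (2 * (x ^ 2 + b ^ 2)) := by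
    unfold vanAlbada
    field_simp
    ring
  rw [heq, abs_div, abs_mul]
  have hkey : |x ^ 2 + 2 * x * b - b ^ 2| ≤ Real.sqrt 2 * (x ^ 2 + b ^ 2) := by
    have h1 : |x ^ 2 + 2 * x * b - b ^ 2| = Real.sqrt ((x ^ 2 + 2 * x * b - b ^ 2) ^ 2) := by
      rw [Real.sqrt_sq_eq_abs]
    rw [h1]
    have h2 : (x ^ 2 + 2 * x * b - b ^ 2) ^ 2 ≤ 2 * (x ^ 2 + b ^ 2) ^ 2 := by nlinarith [sq_nonneg (x^2 - 2*x*b - b^2)]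
    calc Real.sqrt ((x ^ 2 + 2 * x * b - b ^ 2) ^ 2) ≤ Real.sqrt (2 * (x ^ 2 + b ^ 2) ^ 2) :=
          Real.sqrt_le_sqrt h2
      _ = Real.sqrt 2 * (x ^ 2 + b ^ 2) := by
          rw [Real.sqrt_mul (by norm_num), Real.sqrt_sq hd.le]
  have habs : |2 * (x ^ 2 + b ^ 2)| = 2 * (x ^ 2 + b ^ 2) := abs_of_pos (by linarith)
  rw [habs, div_le_iff₀ (by linarith)]
  calc |b| * |x ^ 2 + 2 * x * b - b ^ 2| ≤ |b| * (Real.sqrt 2 * (x ^ 2 + b ^ 2)) :=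
        mul_le_mul_of_nonneg_left hkey (abs_nonneg b)
    _ = Real.sqrt 2 / 2 * |b| * (2 * (x ^ 2 + b ^ 2)) := by ring

theorem vanAlbada_diff_bound (a b c : ℝ) (hb : b ≠ 0) :
    |vanAlbada b c - vanAlbada a b| ≤ Real.sqrt 2 * |b| := by
  rw [vanAlbada_symm b c]
  have h1 := vanAlbada_center c b hb
  have h2 := vanAlbada_center a b hb
  calc |vanAlbada c b - vanAlbada a b|
      = |(vanAlbada c b - b / 2) - (vanAlbada a b - b / 2)| := by ring_nf
    _ ≤ |vanAlbada c b - b / 2| + |vanAlbada a b - b / 2| := abs_sub _ _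
    _ ≤ Real.sqrt 2 / 2 * |b| + Real.sqrt 2 / 2 * |b| := add_le_add h1 h2
    _ = Real.sqrt 2 * |b| := by ring
end

section
/- Consider a conservative scheme on a bi-infinite grid: ū^{n+1}_{j+1/2} = (ū^n_j + ū^n_{j+1})/2 − λ(g_{j+1} − g_j), where (ū^n_j) has finite total variation and the values g_j satisfy λ·|g_{j+1} − g_j| ≤ (1/2)·|ū^n_{j+1} − ū^n_j| for all j. Then the staggered scheme is total-variation diminishing: Σ_j |ū^{n+1}_{j+1/2} − ū^{n+1}_{j−1/2}| ≤ Σ_j |ū^n_{j+1} − ū^n_j|. -/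
lemma staggered_aux (x y : ℝ) (h : |y| ≤ (1 / 2) * |x|) :
    |x / 2 - y| + |x / 2 + y| ≤ |x| := by
  rcases abs_cases (x / 2 - y) with ⟨e1, _⟩ | ⟨e1, _⟩ <;>
    rcases abs_cases (x / 2 + y) with ⟨e2, _⟩ | ⟨e2, _⟩ <;>
    rcases abs_cases y with ⟨e3, _⟩ | ⟨e3, _⟩ <;>
    rcases abs_cases x with ⟨e4, _⟩ | ⟨e4, _⟩ <;>
    linarith


set_option maxHeartbeats 1000000 in
/-- Lemma of Nessyahu–Tadmor: the staggered conservative scheme is TVD under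
the generalized CFL condition `λ|Δg_{j+1/2}| ≤ ½|Δū_{j+1/2}|`.
Here `v j` stands for `ū^{n+1}_{j+1/2}`. -/
theorem staggered_scheme_TVD (u g : ℤ → ℝ) (lam : ℝ) (hlam : 0 < lam)
    (hTV : Summable fun j : ℤ => |u (j + 1) - u j|)
    (hCFL : ∀ j : ℤ, lam * |g (j + 1) - g j| ≤ (1 / 2) * |u (j + 1) - u j|)
    (v : ℤ → ℝ)
    (hv : ∀ j : ℤ, v j = (u j + u (j + 1)) / 2 - lam * (g (j + 1) - g j)) :
    ∑' j : ℤ, |v j - v (j - 1)| ≤ ∑' j : ℤ, |u (j + 1) - u j| := by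
  set a : ℤ → ℝ := fun j => (u (j + 1) - u j) / 2 - lam * (g (j + 1) - g j) with ha_def
  set b : ℤ → ℝ := fun j => (u (j + 1) - u j) / 2 + lam * (g (j + 1) - g j) with hb_def
  have key : ∀ j : ℤ, |a j| + |b j| ≤ |u (j + 1) - u j| := by
    intro j
    have h := hCFL j
    have h1 : |lam * (g (j + 1) - g j)| ≤ (1 / 2) * |u (j + 1) - u j| := by
      rw [abs_mul, abs_of_pos hlam]; exact h
    simp only [ha_def, hb_def]
    exact staggered_aux (u (j + 1) - u j) (lam * (g (j + 1) - g j)) h1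
  have habs_le : ∀ j : ℤ, |a j| ≤ |u (j + 1) - u j| := fun j => by
    have := key j; have := abs_nonneg (b j); linarith
  have hbbs_le : ∀ j : ℤ, |b j| ≤ |u (j + 1) - u j| := fun j => by
    have := key j; have := abs_nonneg (a j); linarith
  have ha : Summable fun j : ℤ => |a j| :=
    Summable.of_nonneg_of_le (fun j => abs_nonneg _) habs_le hTV
  have hb : Summable fun j : ℤ => |b j| :=
    Summable.of_nonneg_of_le (fun j => abs_nonneg _) hbbs_le hTV
  have hb' : Summable fun j : ℤ => |b (j - 1)| :=
    (Equiv.subRight (1 : ℤ)).summable_iff.mpr hb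
  have hvab : ∀ j : ℤ, v j - v (j - 1) = a j + b (j - 1) := by
    intro j
    have hj : (j : ℤ) - 1 + 1 = j := by ring
    rw [hv j, hv (j - 1), hj]
    simp only [ha_def, hb_def]
    ring
  have hpt : ∀ j : ℤ, |v j - v (j - 1)| ≤ |a j| + |b (j - 1)| := fun j => by
    rw [hvab j]; exact abs_add_le _ _
  have hsum : Summable fun j : ℤ => |a j| + |b (j - 1)| := ha.add hb'
  have hleft : Summable fun j : ℤ => |v j - v (j - 1)| :=
    Summable.of_nonneg_of_le (fun j => abs_nonneg _) hpt hsum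
  calc ∑' j : ℤ, |v j - v (j - 1)|
      ≤ ∑' j : ℤ, (|a j| + |b (j - 1)|) := Summable.tsum_le_tsum hpt hleft hsum
    _ = (∑' j : ℤ, |a j|) + ∑' j : ℤ, |b (j - 1)| := Summable.tsum_add ha hb'
    _ = (∑' j : ℤ, |a j|) + ∑' j : ℤ, |b j| := by
        congr 1
        exact (Equiv.subRight (1 : ℤ)).tsum_eq (fun j => |b j|)
    _ = ∑' j : ℤ, (|a j| + |b j|) := (Summable.tsum_add ha hb).symm
    _ ≤ ∑' j : ℤ, |u (j + 1) - u j| := Summable.tsum_le_tsum key (ha.add hb) hTV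
end

section
/- Second-order accuracy of the van Albada limiter: if u is C³ on a neighborhood of x with u'(x) ≠ 0, and a(h) = (u(x) − u(x−h))/h, b(h) = (u(x+h) − u(x))/h, then ψ_vA(a(h), b(h)) = u'(x) + O(h²) as h → 0⁺; more precisely ψ_vA(a(h),b(h)) − u'(x) = (u'''(x)/6 − (u''(x))²/(2u'(x)))·h² + o(h²). -/
/-!
Writing `a`, `b` for the one-sided difference quotients, the limiter is the mean `(a + b) / 2`
minus the correction `(a + b) (b - a)² / ((a + b)² + (b - a)²)`. By Taylor's theorem the mean is
the central difference `u' + u''' h² / 6 + o(h²)` and `b - a = u'' h + o(h²)`, so the correction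
is `u''² h² / (2 u') + o(h²)`; `u' ≠ 0` keeps its denominator away from zero.
-/

open Filter Topology Nat

theorem ContDiffAt.isLittleO_sub_taylor {E : Type*} [NormedAddCommGroup E] [NormedSpace ℝ E]
    {f : ℝ → E} {x : ℝ} {n : ℕ} (hf : ContDiffAt ℝ n f x) :
    (fun y ↦ f y - ∑ k ∈ Finset.range (n + 1), ((k ! : ℝ)⁻¹ * (y - x) ^ k) • iteratedDeriv k f x)
      =o[𝓝 x] fun y ↦ (y - x) ^ n := by
  obtain ⟨s, hs, hfs⟩ := hf.contDiffOn le_rfl (by simp)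
  obtain ⟨ε, hε, hball⟩ := Metric.mem_nhds_iff.mp hs
  have hx : x ∈ Metric.ball x ε := Metric.mem_ball_self hε
  have := taylor_isLittleO (convex_ball x ε) hx (hfs.mono hball)
  rw [Metric.isOpen_ball.nhdsWithin_eq hx] at this
  convert this using 3 with y
  rw [taylor_within_apply]
  refine Finset.sum_congr rfl fun k _ ↦ ?_
  rw [iteratedDerivWithin_of_isOpen Metric.isOpen_ball hx]

theorem ContDiffAt.exists_taylor_three {u : ℝ → ℝ} {x : ℝ} (hu : ContDiffAt ℝ 3 u x) :
    ∃ ρ : ℝ → ℝ, Tendsto ρ (𝓝[≠] 0) (𝓝 0) ∧ ∀ h, u (x + h) = u x + deriv u x * h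
      + iteratedDeriv 2 u x * h ^ 2 / 2 + iteratedDeriv 3 u x * h ^ 3 / 6 + ρ h * h ^ 3 := by
  set P : ℝ → ℝ := fun h ↦ u x + deriv u x * h
      + iteratedDeriv 2 u x * h ^ 2 / 2 + iteratedDeriv 3 u x * h ^ 3 / 6
  refine ⟨fun h ↦ (u (x + h) - P h) / h ^ 3, ?_, fun h ↦ ?_⟩
  · have hshift : Tendsto (x + ·) (𝓝[≠] 0) (𝓝 x) :=
      (continuous_const_add x).tendsto' 0 x (add_zero x) |>.mono_left nhdsWithin_le_nhds
    refine (hu.isLittleO_sub_taylor.comp_tendsto hshift).tendsto_div_nhds_zero.congr fun h ↦ ?_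
    simp only [Finset.sum_range_succ, Finset.range_one, Finset.sum_singleton, factorial,
      smul_eq_mul, iteratedDeriv_zero, iteratedDeriv_one, Function.comp_apply,
      add_sub_cancel_left, P]
    push_cast
    ring
  · rcases eq_or_ne h 0 with rfl | hh
    · simp [P]
    · field_simp
      ring

theorem tendsto_neg_nhdsNE_zero {G : Type*} [TopologicalSpace G] [AddGroup G] [ContinuousNeg G] :
    Tendsto (Neg.neg : G → G) (𝓝[≠] 0) (𝓝[≠] 0) := by
  have := (neg_nhdsNE (a := (0 : G))).le
  rwa [neg_zero] at this

theorem vanAlbada_eq_half_add_sub (a b : ℝ) :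
    vanAlbada a b = (a + b) / 2 - (a + b) * (b - a) ^ 2 / ((a + b) ^ 2 + (b - a) ^ 2) := by
  rw [vanAlbada, show (a + b) ^ 2 + (b - a) ^ 2 = 2 * (a ^ 2 + b ^ 2) by ring]
  rcases eq_or_ne (a ^ 2 + b ^ 2) 0 with h | h
  · obtain ⟨rfl, rfl⟩ : a = 0 ∧ b = 0 := by constructor <;> nlinarith [sq_nonneg a, sq_nonneg b]
    simp
  · field_simp
    ring

theorem tendsto_vanAlbada_sub_div_sq {a b : ℝ → ℝ} {c₁ c₂ κ : ℝ} (hc₁ : c₁ ≠ 0)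
    (hmean : Tendsto (fun h ↦ ((a h + b h) / 2 - c₁ - κ * h ^ 2) / h ^ 2) (𝓝[≠] 0) (𝓝 0))
    (hdiff : Tendsto (fun h ↦ (b h - a h) / h) (𝓝[≠] 0) (𝓝 c₂)) :
    Tendsto (fun h ↦ (vanAlbada (a h) (b h) - c₁ - (κ - c₂ ^ 2 / (2 * c₁)) * h ^ 2) / h ^ 2)
      (𝓝[≠] 0) (𝓝 0) := by
  have hid : Tendsto (fun h : ℝ ↦ h) (𝓝[≠] 0) (𝓝 0) := tendsto_id.mono_left nhdsWithin_le_nhds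
  have hsum : Tendsto (fun h ↦ a h + b h) (𝓝[≠] 0) (𝓝 (2 * c₁)) := by
    have := (((hmean.add_const κ).mul (hid.pow 2)).add_const c₁).const_mul 2
    convert this.congr' (eventually_nhdsWithin_of_forall fun h hh ↦ ?_) using 2
    · ring
    · field_simp [show h ≠ 0 from hh]
      ring
  have hsub : Tendsto (fun h ↦ b h - a h) (𝓝[≠] 0) (𝓝 0) := by
    convert (hid.mul hdiff).congr' (eventually_nhdsWithin_of_forall fun h hh ↦ ?_) using 2
    · ring
    · field_simp [show h ≠ 0 from hh]
  have hcorr : Tendsto (fun h ↦ (a h + b h) * ((b h - a h) / h) ^ 2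
      / ((a h + b h) ^ 2 + (b h - a h) ^ 2)) (𝓝[≠] 0) (𝓝 (c₂ ^ 2 / (2 * c₁))) := by
    convert (hsum.mul (hdiff.pow 2)).div ((hsum.pow 2).add (hsub.pow 2)) (by simp [hc₁]) using 2
    · rfl
    · field_simp
      ring
  convert (hmean.sub (hcorr.sub_const (c₂ ^ 2 / (2 * c₁)))).congr'
    (eventually_nhdsWithin_of_forall fun h hh ↦ ?_) using 2
  · ring
  · rw [vanAlbada_eq_half_add_sub]
    field_simp [show h ≠ 0 from hh]
    ring

section DifferenceQuotients

variable {f ρ : ℝ → ℝ} {c₀ c₁ c₂ c₃ : ℝ}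

theorem tendsto_mean_slope_sub_div_sq (hρ : Tendsto ρ (𝓝[≠] 0) (𝓝 0))
    (hf : ∀ h, f h = c₀ + c₁ * h + c₂ * h ^ 2 / 2 + c₃ * h ^ 3 / 6 + ρ h * h ^ 3) :
    Tendsto (fun h ↦ (((f 0 - f (-h)) / h + (f h - f 0) / h) / 2 - c₁ - c₃ / 6 * h ^ 2) / h ^ 2)
      (𝓝[≠] 0) (𝓝 0) := by
  convert ((hρ.add (hρ.comp tendsto_neg_nhdsNE_zero)).div_const 2).congr'
    (eventually_nhdsWithin_of_forall fun h hh ↦ ?_) using 2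
  · ring
  · simp only [hf, Function.comp_apply]
    field_simp [show h ≠ 0 from hh]
    ring

theorem tendsto_slope_sub_slope_div (hρ : Tendsto ρ (𝓝[≠] 0) (𝓝 0))
    (hf : ∀ h, f h = c₀ + c₁ * h + c₂ * h ^ 2 / 2 + c₃ * h ^ 3 / 6 + ρ h * h ^ 3) :
    Tendsto (fun h ↦ ((f h - f 0) / h - (f 0 - f (-h)) / h) / h) (𝓝[≠] 0) (𝓝 c₂) := by
  have hid : Tendsto (fun h : ℝ ↦ h) (𝓝[≠] 0) (𝓝 0) := tendsto_id.mono_left nhdsWithin_le_nhds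
  convert ((hid.mul (hρ.sub (hρ.comp tendsto_neg_nhdsNE_zero))).const_add c₂).congr'
    (eventually_nhdsWithin_of_forall fun h hh ↦ ?_) using 2
  · ring
  · simp only [hf, Function.comp_apply]
    field_simp [show h ≠ 0 from hh]
    ring

end DifferenceQuotients

open Asymptotics in
/-- Second-order accuracy of the van Albada limiter at non-critical points:
for `u` of class C³ near `x` with `u'(x) ≠ 0`, applying the limiter to the
one-sided difference quotients reproduces `u'(x)` up to the explicit `h²`
term, with `o(h²)` error as `h → 0⁺`. -/
theorem vanAlbada_second_order_accuracy (u : ℝ → ℝ) (x : ℝ)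
    (hu : ContDiffAt ℝ 3 u x) (hux : deriv u x ≠ 0) :
    (fun h : ℝ =>
        vanAlbada ((u x - u (x - h)) / h) ((u (x + h) - u x) / h)
        - deriv u x
        - (iteratedDeriv 3 u x / 6
            - (iteratedDeriv 2 u x) ^ 2 / (2 * deriv u x)) * h ^ 2)
      =o[nhdsWithin 0 (Set.Ioi 0)] fun h : ℝ => h ^ 2 := by
  obtain ⟨ρ, hρ, hexp⟩ := hu.exists_taylor_three
  have key := tendsto_vanAlbada_sub_div_sq hux (tendsto_mean_slope_sub_div_sq hρ hexp)
    (tendsto_slope_sub_slope_div hρ hexp)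
  rw [isLittleO_iff_tendsto']
  · refine (key.mono_left (nhdsWithin_mono 0 fun h hh ↦ ne_of_gt hh)).congr fun h ↦ ?_
    simp only [add_zero, ← sub_eq_add_neg]
  · filter_upwards [self_mem_nhdsWithin] with h hh h2
    exact absurd h2 (pow_ne_zero 2 (ne_of_gt hh))
end
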